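/- Let f : ℝ^d → ℝ be μ-strongly convex (μ > 0), let g = (g_1, …, g_q) : ℝ^d → ℝ^q have each component convex with all subgradients of each g_l bounded in norm by L_g, let A ∈ ℝ^{p×d}, b, v ∈ ℝ^p and z ∈ ℝ^q, and define φ(u, y) = min_x [f(x) + ⟨u, A x − b − v⟩ + ⟨y, g(x) − z⟩] for (u, y) ∈ ℝ^p × ℝ^q_{≥0}. Then at every point ζ = (u, y) with y strictly componentwise positive, φ is differentiable with gradient ∇φ(ζ) = (A x(ζ) − b − v, g(x(ζ)) − z), where x(ζ) is the unique minimizer of x ↦ f(x) + ⟨u, A x − b − v⟩ + ⟨y, g(x) − z⟩. -/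

import Mathlib

open RealInnerProductSpace Finset

/-- A vector `s` is a subgradient of `g` at `x` if `g y ≥ g x + ⟪s, y - x⟫` for all `y`. -/
def IsSubgradientAt {E : Type*} [NormedAddCommGroup E] [InnerProductSpace ℝ E]
    (g : E → ℝ) (s : E) (x : E) : Prop :=
  ∀ y, g y ≥ g x + ⟪s, y - x⟫

/-- The Lagrangian `x ↦ f x + ⟪u, A x − b − v⟫ + ⟪y, g x − z⟫` at `ζ = (u, y)`. -/
noncomputable def lagrangian {d p q : ℕ}
    (f : EuclideanSpace ℝ (Fin d) → ℝ)
    (g : EuclideanSpace ℝ (Fin d) → EuclideanSpace ℝ (Fin q))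
    (A : EuclideanSpace ℝ (Fin d) →L[ℝ] EuclideanSpace ℝ (Fin p))
    (b v : EuclideanSpace ℝ (Fin p)) (z : EuclideanSpace ℝ (Fin q))
    (ζ : EuclideanSpace ℝ (Fin p) × EuclideanSpace ℝ (Fin q))
    (x : EuclideanSpace ℝ (Fin d)) : ℝ :=
  f x + ⟪ζ.1, A x - b - v⟫ + ⟪ζ.2, g x - z⟫

/-!
The Lagrangian `Φ ζ x` is affine in `ζ = (u, y)`: `Φ ζ' x = Φ ζ x + T x (ζ' - ζ)` with slope
`T x = (A x - b - v, g x - z)`. Bounded subgradients make every `g_l` Lipschitz, hence `T` is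
`K`-Lipschitz; for `y ≥ 0` the map `Φ ζ` is `μ`-strongly convex, so it grows quadratically away
from its minimizer. Comparing values at the minimizers `x = x(ζ)` and `x' = x(ζ')`,
`μ/2 δ² - K δ ‖ζ' - ζ‖ ≤ φ ζ' - φ ζ - T x (ζ' - ζ) ≤ 0` with `δ = ‖x' - x‖`, and minimizing the
left side over `δ` gives a remainder of order `‖ζ' - ζ‖²`, i.e. `∇φ(ζ) = T x(ζ)`.
-/

open Set Filter Topology Asymptotics

section Subgradient

variable {E : Type*} [NormedAddCommGroup E] [InnerProductSpace ℝ E] {h : E → ℝ}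

theorem ConvexOn.exists_isSubgradientAt [CompleteSpace E] (hh : ConvexOn ℝ univ h)
    (hc : Continuous h) (x : E) : ∃ s, IsSubgradientAt h s x := by
  have hconv : Convex ℝ {p : E × ℝ | h p.1 < p.2} := by
    simpa using hh.convex_strict_epigraph
  -- The functional separating `(x, h x)` from the open strict epigraph has a negative vertical
  -- component `c`; rescaled by `(-c)⁻¹`, its horizontal part is the subgradient.
  obtain ⟨φ, hφ⟩ := geometric_hahn_banach_open_point (x := (x, h x)) hconv
    (isOpen_lt (hc.comp continuous_fst) continuous_snd) (lt_irrefl (h x))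
  set ℓ := φ.comp (ContinuousLinearMap.inl ℝ E ℝ)
  set c := φ (0, 1)
  have hφ_apply (w : E) (t : ℝ) : φ (w, t) = ℓ w + t * c := by
    rw [show (w, t) = (w, 0) + t • ((0 : E), (1 : ℝ)) by simp, map_add, map_smul, smul_eq_mul]
    rfl
  have hc : c < 0 := by
    have hlt := hφ (x, h x + 1) (by simp)
    rw [hφ_apply, hφ_apply] at hlt
    linarith
  refine ⟨(InnerProductSpace.toDual ℝ E).symm ((-c)⁻¹ • ℓ), fun w => ?_⟩
  rw [InnerProductSpace.toDual_symm_apply, smul_apply, smul_eq_mul, map_sub, ge_iff_le]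
  refine le_of_forall_gt_imp_ge_of_dense fun t ht => ?_
  have hlt := hφ (w, t) ht
  rw [hφ_apply, hφ_apply] at hlt
  rw [← le_sub_iff_add_le', inv_mul_le_iff₀ (neg_pos.2 hc)]
  linarith

theorem IsSubgradientAt.sub_le {s x : E} (hs : IsSubgradientAt h s x) (y : E) :
    h x - h y ≤ ‖s‖ * ‖x - y‖ := by
  have hcs := abs_real_inner_le_norm s (y - x)
  rw [norm_sub_rev] at hcs
  linarith [hs y, neg_abs_le ⟪s, y - x⟫]

theorem ConvexOn.abs_sub_le_of_forall_isSubgradientAt_norm_le [CompleteSpace E] {L : ℝ}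
    (hh : ConvexOn ℝ univ h) (hc : Continuous h)
    (hL : ∀ x s, IsSubgradientAt h s x → ‖s‖ ≤ L) (x y : E) :
    |h x - h y| ≤ L * ‖x - y‖ := by
  have sub_le (x y : E) : h x - h y ≤ L * ‖x - y‖ := by
    obtain ⟨s, hs⟩ := hh.exists_isSubgradientAt hc x
    exact (hs.sub_le y).trans (mul_le_mul_of_nonneg_right (hL x s hs) (norm_nonneg _))
  exact abs_sub_le_iff.2 ⟨sub_le x y, norm_sub_rev x y ▸ sub_le y x⟩

end Subgradient

theorem EuclideanSpace.norm_le_sqrt_card_mul {ι : Type*} [Fintype ι] {f : EuclideanSpace ℝ ι}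
    {c : ℝ} (hf : ∀ i, |f i| ≤ c) : ‖f‖ ≤ √(Fintype.card ι) * |c| := by
  calc ‖f‖ = √(∑ i, ‖f i‖ ^ 2) := EuclideanSpace.norm_eq f
    _ ≤ √(∑ _i : ι, c ^ 2) := by
      gcongr with i
      exact (Real.norm_eq_abs _).trans_le (hf i)
    _ = √(Fintype.card ι) * |c| := by
      rw [Finset.sum_const, Finset.card_univ, nsmul_eq_mul, Real.sqrt_mul (Nat.cast_nonneg _),
        Real.sqrt_sq_eq_abs]

theorem norm_sub_le_of_forall_isSubgradientAt_norm_le {E ι : Type*} [NormedAddCommGroup E]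
    [InnerProductSpace ℝ E] [FiniteDimensional ℝ E] [Fintype ι] {g : E → EuclideanSpace ℝ ι}
    {L : ℝ} (hg : ∀ i, ConvexOn ℝ univ (fun x => g x i))
    (hL : ∀ i x s, IsSubgradientAt (fun w => g w i) s x → ‖s‖ ≤ L) (x y : E) :
    ‖g x - g y‖ ≤ √(Fintype.card ι) * |L| * ‖x - y‖ := by
  have hcomp (i : ι) : |(g x - g y) i| ≤ L * ‖x - y‖ :=
    (hg i).abs_sub_le_of_forall_isSubgradientAt_norm_le
      (continuousOn_univ.mp ((hg i).continuousOn isOpen_univ)) (hL i) x y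
  simpa [abs_mul, mul_assoc] using EuclideanSpace.norm_le_sqrt_card_mul hcomp

theorem StrongConvexOn.add_sq_norm_sub_le_of_forall_le {E : Type*} [NormedAddCommGroup E]
    [NormedSpace ℝ E] {s : Set E} {f : E → ℝ} {m : ℝ} (hf : StrongConvexOn s m f) {x w : E}
    (hx : x ∈ s) (hmin : ∀ y ∈ s, f x ≤ f y) (hw : w ∈ s) :
    f x + m / 2 * ‖w - x‖ ^ 2 ≤ f w := by
  have hseg : ∀ t ∈ Ioo (0 : ℝ) 1, f x + (1 - t) * (m / 2 * ‖w - x‖ ^ 2) ≤ f w := by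
    rintro t ⟨ht0, ht1⟩
    have hconv := hf.2 hw hx ht0.le (sub_nonneg.2 ht1.le) (add_sub_cancel t 1)
    have hle := hmin _ (hf.1 hw hx ht0.le (sub_nonneg.2 ht1.le) (add_sub_cancel t 1))
    simp only [smul_eq_mul] at hconv
    have : t * (f x + (1 - t) * (m / 2 * ‖w - x‖ ^ 2) - f w) ≤ 0 := by linarith
    linarith [nonpos_of_mul_nonpos_right this ht0]
  have hlim : Tendsto (fun t : ℝ => f x + (1 - t) * (m / 2 * ‖w - x‖ ^ 2)) (𝓝[>] 0)
      (𝓝 (f x + m / 2 * ‖w - x‖ ^ 2)) :=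
    ((Continuous.tendsto' (by fun_prop) 0 _ (by simp))).mono_left nhdsWithin_le_nhds
  exact le_of_tendsto hlim (eventually_of_mem (Ioo_mem_nhdsGT one_pos) hseg)

theorem hasFDerivWithinAt_of_norm_sub_sub_le_sq {P F : Type*} [NormedAddCommGroup P]
    [NormedSpace ℝ P] [NormedAddCommGroup F] [NormedSpace ℝ F] {φ : P → F} {L : P →L[ℝ] F}
    {D : Set P} {ζ : P} {C : ℝ} (h : ∀ ζ' ∈ D, ‖φ ζ' - φ ζ - L (ζ' - ζ)‖ ≤ C * ‖ζ' - ζ‖ ^ 2) :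
    HasFDerivWithinAt φ L D ζ := by
  refine HasFDerivWithinAt.of_isLittleO ?_
  have hbigO : (fun ζ' => φ ζ' - φ ζ - L (ζ' - ζ)) =O[𝓝[D] ζ] fun ζ' => ‖ζ' - ζ‖ ^ 2 :=
    IsBigO.of_bound C (eventually_nhdsWithin_of_forall fun ζ' hζ' => by simpa using h ζ' hζ')
  have hsub : Tendsto (fun ζ' => ζ' - ζ) (𝓝[D] ζ) (𝓝 0) :=
    tendsto_sub_nhds_zero_iff.2 (tendsto_nhdsWithin_of_tendsto_nhds tendsto_id)
  exact hbigO.trans_isLittleO ((isLittleO_norm_pow_id one_lt_two).comp_tendsto hsub)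

section Danskin

variable {P E : Type*} [NormedAddCommGroup P] [NormedSpace ℝ P] [NormedAddCommGroup E]
  {Φ : P → E → ℝ} {T : E → P →L[ℝ] ℝ} {K μ : ℝ}

theorem abs_min_sub_min_sub_le_sq (hΦ : ∀ ζ ζ' x, Φ ζ' x = Φ ζ x + T x (ζ' - ζ))
    (hT : ∀ x x', ‖T x' - T x‖ ≤ K * ‖x' - x‖) (hμ : 0 < μ) {ζ ζ' : P} {x x' : E}
    (hx : ∀ w, Φ ζ x + μ / 2 * ‖w - x‖ ^ 2 ≤ Φ ζ w) (hx' : ∀ w, Φ ζ' x' ≤ Φ ζ' w) :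
    |Φ ζ' x' - Φ ζ x - T x (ζ' - ζ)| ≤ K ^ 2 / (2 * μ) * ‖ζ' - ζ‖ ^ 2 := by
  set n := ‖ζ' - ζ‖
  set δ := ‖x' - x‖
  have hupper : Φ ζ' x' ≤ Φ ζ x + T x (ζ' - ζ) := hΦ ζ ζ' x ▸ hx' x
  have hcross : -(K * δ * n) ≤ (T x' - T x) (ζ' - ζ) := by
    refine neg_le_of_abs_le ((Real.norm_eq_abs _).symm.trans_le ?_)
    exact ((T x' - T x).le_opNorm _).trans (mul_le_mul_of_nonneg_right (hT x x') (norm_nonneg _))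
  have hamgm : K * δ * n ≤ μ / 2 * δ ^ 2 + K ^ 2 / (2 * μ) * n ^ 2 := by
    have hsq : 0 ≤ (μ * δ - K * n) ^ 2 / (2 * μ) := by positivity
    have : (μ * δ - K * n) ^ 2 / (2 * μ) = μ / 2 * δ ^ 2 + K ^ 2 / (2 * μ) * n ^ 2 - K * δ * n := by
      field_simp
      ring
    linarith
  have hlower := hx x'
  have hval := hΦ ζ ζ' x'
  have hC : 0 ≤ K ^ 2 / (2 * μ) * n ^ 2 := by positivity
  rw [sub_apply] at hcross
  rw [abs_le]
  constructor <;> linarith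

variable [NormedSpace ℝ E]

theorem hasFDerivWithinAt_min_of_strongConvexOn (hΦ : ∀ ζ ζ' x, Φ ζ' x = Φ ζ x + T x (ζ' - ζ))
    (hT : ∀ x x', ‖T x' - T x‖ ≤ K * ‖x' - x‖) (hμ : 0 < μ) {D : Set P} {ζ : P} (hζ : ζ ∈ D)
    (hconv : StrongConvexOn univ μ (Φ ζ)) {xm : P → E}
    (hxm : ∀ ζ' ∈ D, ∀ w, Φ ζ' (xm ζ') ≤ Φ ζ' w) :
    HasFDerivWithinAt (fun ζ' => Φ ζ' (xm ζ')) (T (xm ζ)) D ζ := by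
  refine hasFDerivWithinAt_of_norm_sub_sub_le_sq (C := K ^ 2 / (2 * μ)) fun ζ' hζ' => ?_
  rw [Real.norm_eq_abs]
  refine abs_min_sub_min_sub_le_sq hΦ hT hμ (fun w => ?_) (hxm ζ' hζ')
  exact hconv.add_sq_norm_sub_le_of_forall_le (mem_univ _) (fun y _ => hxm ζ hζ y) (mem_univ w)

end Danskin

section InnerProd

variable {F₁ F₂ : Type*} [NormedAddCommGroup F₁] [InnerProductSpace ℝ F₁] [NormedAddCommGroup F₂]
  [InnerProductSpace ℝ F₂]

noncomputable def innerProdSL (a : F₁) (c : F₂) : F₁ × F₂ →L[ℝ] ℝ :=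
  (innerSL ℝ a).comp (ContinuousLinearMap.fst ℝ F₁ F₂) +
    (innerSL ℝ c).comp (ContinuousLinearMap.snd ℝ F₁ F₂)

@[simp]
theorem innerProdSL_apply (a : F₁) (c : F₂) (ζ : F₁ × F₂) :
    innerProdSL a c ζ = ⟪a, ζ.1⟫ + ⟪c, ζ.2⟫ :=
  rfl

theorem innerProdSL_sub (a a' : F₁) (c c' : F₂) :
    innerProdSL a c - innerProdSL a' c' = innerProdSL (a - a') (c - c') := by
  refine ContinuousLinearMap.ext fun ζ => ?_
  simp only [sub_apply, innerProdSL_apply, inner_sub_left]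
  ring

theorem norm_innerProdSL_le (a : F₁) (c : F₂) : ‖innerProdSL a c‖ ≤ ‖a‖ + ‖c‖ :=
  calc ‖innerProdSL a c‖
      ≤ ‖innerSL ℝ a‖ * ‖ContinuousLinearMap.fst ℝ F₁ F₂‖ +
          ‖innerSL ℝ c‖ * ‖ContinuousLinearMap.snd ℝ F₁ F₂‖ :=
        (norm_add_le ((innerSL ℝ a).comp (ContinuousLinearMap.fst ℝ F₁ F₂))
          ((innerSL ℝ c).comp (ContinuousLinearMap.snd ℝ F₁ F₂))).trans
          (add_le_add (ContinuousLinearMap.opNorm_comp_le _ _)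
            (ContinuousLinearMap.opNorm_comp_le _ _))
    _ ≤ ‖a‖ + ‖c‖ := by
        rw [innerSL_apply_norm, innerSL_apply_norm]
        gcongr
        · exact mul_le_of_le_one_right (norm_nonneg a) (ContinuousLinearMap.norm_fst_le ℝ F₁ F₂)
        · exact mul_le_of_le_one_right (norm_nonneg c) (ContinuousLinearMap.norm_snd_le ℝ F₁ F₂)

end InnerProd

theorem convexOn_inner_of_nonneg {E ι : Type*} [AddCommGroup E] [Module ℝ E] [Fintype ι]
    {s : Set E} (hs : Convex ℝ s) {G : E → EuclideanSpace ℝ ι}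
    (hG : ∀ i, ConvexOn ℝ s fun x => G x i) {y : EuclideanSpace ℝ ι} (hy : ∀ i, 0 ≤ y i) :
    ConvexOn ℝ s fun x => ⟪y, G x⟫ := by
  refine ⟨hs, fun x hx x' hx' a b ha hb hab => ?_⟩
  simp only [PiLp.inner_apply, RCLike.inner_apply, conj_trivial, smul_eq_mul, Finset.mul_sum,
    ← Finset.sum_add_distrib]
  refine Finset.sum_le_sum fun i _ => ?_
  have := mul_le_mul_of_nonneg_right ((hG i).2 hx hx' ha hb hab) (hy i)
  simp only [smul_eq_mul] at this
  linarith

section Lagrangian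

variable {d p q : ℕ} {f : EuclideanSpace ℝ (Fin d) → ℝ}
  {g : EuclideanSpace ℝ (Fin d) → EuclideanSpace ℝ (Fin q)}
  {A : EuclideanSpace ℝ (Fin d) →L[ℝ] EuclideanSpace ℝ (Fin p)} {b v : EuclideanSpace ℝ (Fin p)}
  {z : EuclideanSpace ℝ (Fin q)}

theorem lagrangian_eq_add_innerProdSL (ζ ζ' : EuclideanSpace ℝ (Fin p) × EuclideanSpace ℝ (Fin q))
    (x : EuclideanSpace ℝ (Fin d)) :
    lagrangian f g A b v z ζ' x =
      lagrangian f g A b v z ζ x + innerProdSL (A x - b - v) (g x - z) (ζ' - ζ) := by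
  simp only [lagrangian, innerProdSL_apply, Prod.fst_sub, Prod.snd_sub, inner_sub_right,
    real_inner_comm (A x - b - v), real_inner_comm (g x - z), inner_sub_left]
  ring

theorem strongConvexOn_lagrangian {μ : ℝ} (hf : ConvexOn ℝ univ fun x => f x - μ / 2 * ‖x‖ ^ 2)
    (hg : ∀ l, ConvexOn ℝ univ fun x => g x l)
    {ζ : EuclideanSpace ℝ (Fin p) × EuclideanSpace ℝ (Fin q)} (hζ : ∀ l, 0 ≤ ζ.2 l) :
    StrongConvexOn univ μ (lagrangian f g A b v z ζ) := by
  have haffine : ConvexOn ℝ univ fun x => ⟪ζ.1, A x - b - v⟫ := by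
    refine ((((innerSL ℝ ζ.1).comp A).toLinearMap.convexOn convex_univ).add_const
      (-⟪ζ.1, b + v⟫)).congr fun x _ => ?_
    simp only [Pi.add_apply, ContinuousLinearMap.coe_coe, ContinuousLinearMap.comp_apply,
      innerSL_apply_apply, inner_sub_right, inner_add_right]
    ring
  have hpenalty : ConvexOn ℝ univ fun x => ⟪ζ.2, g x - z⟫ :=
    convexOn_inner_of_nonneg convex_univ
      (fun l => ((hg l).add_const (-z l)).congr fun x _ => by simp [sub_eq_add_neg]) hζ
  refine strongConvexOn_iff_convex.2 ?_
  refine ((hf.add haffine).add hpenalty).congr fun x _ => ?_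
  simp only [lagrangian, Pi.add_apply]
  ring

theorem norm_innerProdSL_sub_le {Lg : ℝ} (hg : ∀ l, ConvexOn ℝ univ fun x => g x l)
    (hsub : ∀ l x s, IsSubgradientAt (fun w => g w l) s x → ‖s‖ ≤ Lg)
    (x x' : EuclideanSpace ℝ (Fin d)) :
    ‖innerProdSL (A x' - b - v) (g x' - z) - innerProdSL (A x - b - v) (g x - z)‖ ≤
      (‖A‖ + √q * |Lg|) * ‖x' - x‖ := by
  rw [innerProdSL_sub, sub_sub_sub_cancel_right, sub_sub_sub_cancel_right,
    sub_sub_sub_cancel_right, ← map_sub, add_mul]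
  refine (norm_innerProdSL_le _ _).trans (add_le_add (A.le_opNorm _) ?_)
  simpa using norm_sub_le_of_forall_isSubgradientAt_norm_le hg hsub x' x

end Lagrangian

/-- The dual function `φ(u,y) = min_x [f x + ⟪u, A x − b − v⟫ + ⟪y, g x − z⟫]`
is differentiable at every `ζ = (u, y)` with `y > 0` componentwise, with gradient
`∇φ(ζ) = (A x(ζ) − b − v, g(x(ζ)) − z)`, where `x(ζ)` is the unique minimizer of the
Lagrangian. -/
theorem dual_function_differentiable_at_interior
    (d p q : ℕ) (μ Lg : ℝ) (hμ : 0 < μ)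
    (f : EuclideanSpace ℝ (Fin d) → ℝ)
    (hf : ConvexOn ℝ Set.univ (fun x => f x - μ / 2 * ‖x‖ ^ 2))
    (g : EuclideanSpace ℝ (Fin d) → EuclideanSpace ℝ (Fin q))
    (hg : ∀ l, ConvexOn ℝ Set.univ (fun x => g x l))
    (hsub : ∀ (l : Fin q) (x s : EuclideanSpace ℝ (Fin d)),
      IsSubgradientAt (fun w => g w l) s x → ‖s‖ ≤ Lg)
    (A : EuclideanSpace ℝ (Fin d) →L[ℝ] EuclideanSpace ℝ (Fin p))
    (b v : EuclideanSpace ℝ (Fin p)) (z : EuclideanSpace ℝ (Fin q))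
    (D : Set (EuclideanSpace ℝ (Fin p) × EuclideanSpace ℝ (Fin q)))
    (hD : D = {ζ | ∀ l, 0 ≤ ζ.2 l})
    -- `xm` selects, for each admissible `ζ`, the (unique) minimizer of the Lagrangian
    (xm : (EuclideanSpace ℝ (Fin p) × EuclideanSpace ℝ (Fin q)) → EuclideanSpace ℝ (Fin d))
    (hxm : ∀ ζ ∈ D, ∀ w, lagrangian f g A b v z ζ (xm ζ) ≤ lagrangian f g A b v z ζ w) :
    ∀ ζ : EuclideanSpace ℝ (Fin p) × EuclideanSpace ℝ (Fin q), (∀ l, 0 < ζ.2 l) →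
      HasFDerivWithinAt (fun ζ' => lagrangian f g A b v z ζ' (xm ζ'))
        ((innerSL ℝ (A (xm ζ) - b - v)).comp
            (ContinuousLinearMap.fst ℝ (EuclideanSpace ℝ (Fin p)) (EuclideanSpace ℝ (Fin q)))
          + (innerSL ℝ (g (xm ζ) - z)).comp
            (ContinuousLinearMap.snd ℝ (EuclideanSpace ℝ (Fin p)) (EuclideanSpace ℝ (Fin q))))
        D ζ := by
  intro ζ hpos
  have hζ : ∀ l, 0 ≤ ζ.2 l := fun l => (hpos l).le
  exact hasFDerivWithinAt_min_of_strongConvexOn (T := fun x => innerProdSL (A x - b - v) (g x - z))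
    lagrangian_eq_add_innerProdSL (norm_innerProdSL_sub_le hg hsub) hμ (hD ▸ hζ)
    (strongConvexOn_lagrangian hf hg hζ) hxm
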